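/- Consider an instance of P_m||C_max with m ≥ 2 machines and n jobs with processing times p_1 ≥ p_2 ≥ … ≥ p_n ≥ 0. If the critical machine of an LPT schedule is assigned exactly 2 jobs, then C^LPT ≤ (4/3 − 1/(3(m−1))) · C*. -/
import Mathlib


open Finset

/-- Load of machine `i` under schedule `σ` with processing times `p`. -/
def mload {m n : ℕ} (p : Fin n → ℝ) (σ : Fin n → Fin m) (i : Fin m) : ℝ :=
  ∑ j ∈ Finset.univ.filter (fun j => σ j = i), p j

/-- Makespan of a schedule: the maximum machine load. -/
noncomputable def makespan {m n : ℕ} (p : Fin n → ℝ) (σ : Fin n → Fin m) : ℝ :=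
  ⨆ i : Fin m, mload p σ i

/-- Optimal makespan `C*`: minimum makespan over all schedules on `m` machines. -/
noncomputable def optMakespan (m : ℕ) {n : ℕ} (p : Fin n → ℝ) : ℝ :=
  ⨅ σ : Fin n → Fin m, makespan p σ

/-- Processing times are sorted non-increasingly and are nonnegative. -/
def SortedNonneg {n : ℕ} (p : Fin n → ℝ) : Prop :=
  (∀ i j : Fin n, i ≤ j → p j ≤ p i) ∧ ∀ j, 0 ≤ p j

/-- Load of machine `i` just before job `j` is assigned, when all jobs of `T`
are placed first and the remaining jobs are assigned in index order:
it counts all jobs of `T` on machine `i` plus all jobs of index `< j` on machine `i`. -/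
def prefLoad {m n : ℕ} (p : Fin n → ℝ) (σ : Fin n → Fin m) (T : Finset (Fin n))
    (j : Fin n) (i : Fin m) : ℝ :=
  ∑ j' ∈ Finset.univ.filter (fun j' => (j' ∈ T ∨ j' < j) ∧ σ j' = i), p j'

/-- `σ` is a list schedule obtained by first placing all jobs of `T` together on
one machine and then assigning the remaining jobs in index order (i.e. in
non-increasing order of processing time, for sorted `p`), each to a machine of
minimal current load. -/
def IsLSAfter {m n : ℕ} (p : Fin n → ℝ) (T : Finset (Fin n)) (σ : Fin n → Fin m) : Prop :=
  (∀ j ∈ T, ∀ j' ∈ T, σ j = σ j') ∧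
  ∀ j, j ∉ T → ∀ i, prefLoad p σ T j (σ j) ≤ prefLoad p σ T j i

/-- `σ` is an LPT schedule: jobs assigned in order `1,…,n`, each to a machine of
minimal current load. -/
def IsLPT {m n : ℕ} (p : Fin n → ℝ) (σ : Fin n → Fin m) : Prop :=
  IsLSAfter p ∅ σ

/-- `j'` is the critical job of schedule `σ`: it is assigned to a critical machine
(one whose load equals the makespan), and it is the largest-indexed job assigned
to a critical machine. -/
def IsCriticalJob {m n : ℕ} (p : Fin n → ℝ) (σ : Fin n → Fin m) (j' : Fin n) : Prop :=
  mload p σ (σ j') = makespan p σ ∧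
  ∀ j : Fin n, mload p σ (σ j) = makespan p σ → j ≤ j'

/-- The (1-based) position of job `j'` on its machine: the number of jobs of index
`≤ j'` assigned to the same machine as `j'`. -/
def posOn {m n : ℕ} (σ : Fin n → Fin m) (j' : Fin n) : ℕ :=
  (Finset.univ.filter (fun t => σ t = σ j' ∧ t ≤ j')).card

/-- The tuple of the `k` consecutive jobs `j'-k+1, …, j'` (in 1-based terms). -/
def tupleSet {n : ℕ} (j' : Fin n) (k : ℕ) : Finset (Fin n) :=
  Finset.univ.filter (fun t => t ≤ j' ∧ j'.val < t.val + k)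

/-- An LPT′ schedule for critical job `j'`: job `j'` is placed alone on a machine
first, then the remaining jobs are assigned in index order, each to a machine of
minimal current load. -/
def IsLPTprime {m n : ℕ} (p : Fin n → ℝ) (j' : Fin n) (σ' : Fin n → Fin m) : Prop :=
  IsLSAfter p {j'} σ'

/-- An LPT″ schedule for critical job `j'` in position `k`: jobs `j'-k+1,…,j'` are
placed together on one machine first, then the remaining jobs are assigned in
non-increasing order of processing time, each to a machine of minimal current load. -/
def IsLPTsec {m n : ℕ} (p : Fin n → ℝ) (j' : Fin n) (k : ℕ) (σ'' : Fin n → Fin m) : Prop :=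
  IsLSAfter p (tupleSet j' k) σ''

lemma mload_nonneg {m n : ℕ} (p : Fin n → ℝ) (hp : ∀ j, 0 ≤ p j)
    (σ : Fin n → Fin m) (i : Fin m) : 0 ≤ mload p σ i :=
  Finset.sum_nonneg fun j _ => hp j

lemma mload_le_makespan {m n : ℕ} (p : Fin n → ℝ) (σ : Fin n → Fin m) (i : Fin m) :
    mload p σ i ≤ makespan p σ :=
  le_ciSup (Set.Finite.bddAbove (Set.finite_range _)) i

lemma exists_optSchedule {m n : ℕ} (p : Fin n → ℝ) (hm : 0 < m) :
    ∃ σs : Fin n → Fin m, makespan p σs = optMakespan m p := by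
  have : Nonempty (Fin m) := Fin.pos_iff_nonempty.mp hm
  have hfin : (Set.range fun σ : Fin n → Fin m => makespan p σ).Finite := Set.finite_range _
  have hne2 : (Set.range fun σ : Fin n → Fin m => makespan p σ).Nonempty :=
    Set.range_nonempty _
  obtain ⟨σs, hσs⟩ := hne2.csInf_mem hfin
  exact ⟨σs, by rw [optMakespan, iInf]; exact hσs⟩


set_option maxHeartbeats 1000000 in
/-- bound `r₂`: for `m ≥ 2`, if the critical machine of an LPT
schedule is assigned exactly 2 jobs, then `C^LPT ≤ (4/3 − 1/(3(m−1))) · C*`. -/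
theorem stmt16 {m n : ℕ} (hm : 2 ≤ m)
    (p : Fin n → ℝ) (hp : SortedNonneg p)
    (σ : Fin n → Fin m) (hσ : IsLPT p σ)
    (i : Fin m) (hcritM : mload p σ i = makespan p σ)
    (hcard : (Finset.univ.filter (fun t => σ t = i)).card = 2) :
    makespan p σ ≤ (4 / 3 - 1 / (3 * ((m : ℝ) - 1))) * optMakespan m p := by
  classical
  obtain ⟨hsort, hpos⟩ := hp
  -- the two jobs on the critical machine
  have habex : ∃ a b : Fin n, a < b ∧
      Finset.univ.filter (fun t => σ t = i) = {a, b} := by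
    obtain ⟨a, b, hne, hset⟩ := Finset.card_eq_two.mp hcard
    rcases hne.lt_or_gt with h | h
    · exact ⟨a, b, h, hset⟩
    · exact ⟨b, a, h, by rw [hset, Finset.pair_comm]⟩
  obtain ⟨a, b, hab, hset⟩ := habex
  have hσa : σ a = i := by
    have : a ∈ Finset.univ.filter (fun t => σ t = i) := by rw [hset]; simp
    simpa using this
  have hσb : σ b = i := by
    have : b ∈ Finset.univ.filter (fun t => σ t = i) := by rw [hset]; simp
    simpa using this
  have hba : p b ≤ p a := hsort a b hab.le
  have hloadi : mload p σ i = p a + p b := by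
    rw [mload, hset, Finset.sum_pair hab.ne]
  -- prefLoad before job b equals sum over J ℓ
  have hpref : ∀ ℓ : Fin m, prefLoad p σ ∅ b ℓ =
      ∑ j' ∈ Finset.univ.filter (fun j' => j' < b ∧ σ j' = ℓ), p j' := by
    intro ℓ; unfold prefLoad; congr 1; ext j'; simp
  have hJi : Finset.univ.filter (fun j' => j' < b ∧ σ j' = i) = {a} := by
    ext j'
    simp only [mem_filter, mem_univ, true_and, mem_singleton]
    constructor
    · rintro ⟨hlt, hσj⟩
      have hj : j' ∈ ({a, b} : Finset (Fin n)) := by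
        rw [← hset]; simp [hσj]
      rcases Finset.mem_insert.mp hj with h | h
      · exact h
      · exact absurd (Finset.mem_singleton.mp h) (by rintro rfl; exact absurd rfl hlt.ne)
    · rintro rfl; exact ⟨hab, hσa⟩
  have hmin : ∀ ℓ : Fin m,
      p a ≤ ∑ j' ∈ Finset.univ.filter (fun j' => j' < b ∧ σ j' = ℓ), p j' := by
    intro ℓ
    have h := hσ.2 b (Finset.notMem_empty b) ℓ
    rw [hpref, hpref, hσb, hJi, Finset.sum_singleton] at h
    exact h
  -- optimal schedule
  obtain ⟨σs, hσseq⟩ := exists_optSchedule p (show 0 < m by omega)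
  set Cs := optMakespan m p with hCsdef
  have hload_le : ∀ ℓ, mload p σs ℓ ≤ Cs := fun ℓ => hσseq ▸ mload_le_makespan p σs ℓ
  have hCs0 : 0 ≤ Cs :=
    le_trans (mload_nonneg p hpos σs ⟨0, by omega⟩) (hload_le _)
  have hpj_le : ∀ j, p j ≤ Cs := by
    intro j
    have h1 : p j ≤ mload p σs (σs j) :=
      Finset.single_le_sum (fun k _ => hpos k) (by simp)
    exact h1.trans (hload_le _)
  have hpair : ∀ (j j' : Fin n), j ≠ j' → σs j = σs j' → p j + p j' ≤ Cs := by
    intro j j' hne heq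
    have hsub : ({j, j'} : Finset (Fin n)) ⊆ Finset.univ.filter (fun t => σs t = σs j) := by
      intro t ht
      simp only [Finset.mem_insert, Finset.mem_singleton] at ht
      rcases ht with rfl | rfl <;> simp [heq]
    calc p j + p j' = ∑ t ∈ ({j, j'} : Finset (Fin n)), p t := (Finset.sum_pair hne).symm
      _ ≤ mload p σs (σs j) :=
          Finset.sum_le_sum_of_subset_of_nonneg hsub (fun t _ _ => hpos t)
      _ ≤ Cs := hload_le _
  have hm2 : (2 : ℝ) ≤ (m : ℝ) := by exact_mod_cast hm
  have hM1 : (1 : ℝ) ≤ (m : ℝ) - 1 := by linarith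
  rw [← hcritM, hloadi]
  by_cases hcase : p a + p b ≤ Cs
  · -- easy case
    have h13 : 1 / (3 * ((m : ℝ) - 1)) ≤ 1 / 3 := by
      rw [div_le_div_iff₀ (by linarith) (by norm_num)]
      linarith
    nlinarith [hCs0]
  push_neg at hcase
  -- hard case : Cs < p a + p b
  have hapos : 0 < p a := by nlinarith [hpos b]
  by_cases hyx : p a ≤ p b
  · -- p a = p b : contradiction
    exfalso
    have hinj : Set.InjOn σs (Finset.Iic b : Finset (Fin n)) := by
      intro j hj j' hj' heq
      by_contra hne
      have hjb : j ≤ b := by simpa using hj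
      have hjb' : j' ≤ b := by simpa using hj'
      have h1 : p b ≤ p j := hsort j b hjb
      have h2 : p b ≤ p j' := hsort j' b hjb'
      have := hpair j j' hne heq
      linarith
    have h1 : (Finset.Iic b).card ≤ m := by
      have := Finset.card_le_card_of_injOn σs (fun j _ => Finset.mem_univ _) hinj
      simpa using this
    have hsurj : Set.SurjOn σ ((Finset.Iio b).erase a : Finset (Fin n))
        ((Finset.univ.erase i : Finset (Fin m)) : Set (Fin m)) := by
      intro ℓ hℓ
      have hℓi : ℓ ≠ i := (Finset.mem_erase.mp (Finset.mem_coe.mp hℓ)).1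
      have hx := hmin ℓ
      have hne : (Finset.univ.filter (fun j' => j' < b ∧ σ j' = ℓ)).Nonempty := by
        by_contra h
        rw [Finset.not_nonempty_iff_eq_empty] at h
        rw [h, Finset.sum_empty] at hx
        linarith
      obtain ⟨j, hj⟩ := hne
      simp only [mem_filter, mem_univ, true_and] at hj
      refine ⟨j, ?_, hj.2⟩
      rw [Finset.mem_coe, Finset.mem_erase, Finset.mem_Iio]
      exact ⟨fun h => hℓi (by rw [← hj.2, h, hσa]), hj.1⟩
    have h2 : (Finset.univ.erase i : Finset (Fin m)).card ≤
        ((Finset.Iio b).erase a).card :=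
      Finset.card_le_card_of_surjOn σ hsurj
    have e1 : (Finset.univ.erase i : Finset (Fin m)).card = m - 1 := by
      rw [Finset.card_erase_of_mem (Finset.mem_univ i)]; simp
    have e2 : ((Finset.Iio b).erase a).card = (Finset.Iio b).card - 1 := by
      rw [Finset.card_erase_of_mem (by simpa using hab)]
    have e3 : (Finset.Iic b).card = (Finset.Iio b).card + 1 := by
      rw [← Finset.Iio_insert, Finset.card_insert_of_notMem (by simp)]
    have e4 : 0 < (Finset.Iio b).card := Finset.card_pos.mpr ⟨a, by simpa using hab⟩
    omega
  push_neg at hyx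
  -- main case: p b < p a
  set B := Finset.univ.filter (fun j : Fin n => j ≤ b ∧ p a ≤ p j) with hBdef
  set R := Finset.univ.filter (fun j : Fin n => j ≤ b ∧ p j < p a) with hRdef
  have haB : a ∈ B := by simp [hBdef, hab.le]
  have hbR : b ∈ R := by simp [hRdef, hyx]
  have hRmem : ∀ j ∈ R, j ≤ b ∧ p j < p a := by
    intro j hj; simpa [hRdef] using hj
  have hBmem : ∀ j ∈ B, j ≤ b ∧ p a ≤ p j := by
    intro j hj; simpa [hBdef] using hj
  have hRy : ∀ j ∈ R, p b ≤ p j := fun j hj => hsort j b (hRmem j hj).1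
  -- optimal schedule: bigs occupy distinct machines, rest jobs avoid them
  have hinjB : Set.InjOn σs (B : Set (Fin n)) := by
    intro j hj j' hj' heq
    by_contra hne
    have h1 := (hBmem j (Finset.mem_coe.mp hj)).2
    have h2 := (hBmem j' (Finset.mem_coe.mp hj')).2
    have := hpair j j' hne heq
    linarith
  set MB := B.image σs with hMBdef
  have hBRsep : ∀ jR ∈ R, σs jR ∉ MB := by
    intro jR hjR hmem
    obtain ⟨jB, hjB, heq⟩ := Finset.mem_image.mp hmem
    have h1 := (hBmem jB hjB).2
    have h2 := (hRmem jR hjR).2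
    have hne : jB ≠ jR := fun h => by rw [h] at h1; linarith
    have := hpair jB jR hne heq.symm.symm
    have h3 := hRy jR hjR
    linarith
  set MR := (Finset.univ : Finset (Fin m)) \ MB with hMRdef
  have hcardMB : MB.card = B.card := Finset.card_image_of_injOn hinjB
  have hbMR : σs b ∈ MR := by
    rw [hMRdef, Finset.mem_sdiff]
    exact ⟨Finset.mem_univ _, hBRsep b hbR⟩
  have hβ1 : 1 ≤ B.card := Finset.card_pos.mpr ⟨a, haB⟩
  have hBm : B.card ≤ m - 1 := by
    have hsub : MB ⊆ Finset.univ.erase (σs b) := by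
      intro ℓ hℓ
      rw [Finset.mem_erase]
      exact ⟨fun h => hBRsep b hbR (h ▸ hℓ), Finset.mem_univ _⟩
    have := Finset.card_le_card hsub
    rw [hcardMB] at this
    rw [Finset.card_erase_of_mem (Finset.mem_univ _)] at this
    simpa using this
  have hcardMR : MR.card = m - B.card := by
    rw [hMRdef, Finset.card_sdiff_of_subset (Finset.subset_univ _), hcardMB]
    simp
  -- machines with only small jobs before b
  set W := Finset.univ.filter
      (fun ℓ : Fin m => ℓ ≠ i ∧ ∀ j' : Fin n, j' < b → σ j' = ℓ → p j' < p a) with hWdef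
  set U := Finset.univ.filter
      (fun ℓ : Fin m => ℓ ≠ i ∧ ¬ (∀ j' : Fin n, j' < b → σ j' = ℓ → p j' < p a)) with hUdef
  have hUcard : U.card ≤ B.card - 1 := by
    have hc : (B.erase a).card = B.card - 1 := Finset.card_erase_of_mem haB
    rw [← hc]
    apply Finset.card_le_card_of_surjOn σ
    intro ℓ hℓ
    have hℓ' := Finset.mem_coe.mp hℓ
    rw [hUdef, Finset.mem_filter] at hℓ'
    obtain ⟨-, hℓi, hbig⟩ := hℓ'
    push_neg at hbig
    obtain ⟨j', hj'b, hσj', hpj'⟩ := hbig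
    refine ⟨j', ?_, hσj'⟩
    rw [Finset.mem_coe, Finset.mem_erase]
    constructor
    · rintro rfl; exact hℓi (hσj' ▸ hσa ▸ rfl)
    · rw [hBdef, Finset.mem_filter]
      exact ⟨Finset.mem_univ _, hj'b.le, hpj'⟩
  have hWU : m ≤ W.card + B.card := by
    have hcov : (Finset.univ : Finset (Fin m)) ⊆ insert i (W ∪ U) := by
      intro ℓ _
      by_cases h1 : ℓ = i
      · simp [h1]
      · by_cases h2 : ∀ j' : Fin n, j' < b → σ j' = ℓ → p j' < p a
        · simp only [Finset.mem_insert, Finset.mem_union]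
          exact Or.inr (Or.inl (by rw [hWdef, Finset.mem_filter]; exact ⟨Finset.mem_univ _, h1, h2⟩))
        · simp only [Finset.mem_insert, Finset.mem_union]
          exact Or.inr (Or.inr (by rw [hUdef, Finset.mem_filter]; exact ⟨Finset.mem_univ _, h1, h2⟩))
    have h3 := Finset.card_le_card hcov
    have h4 := Finset.card_insert_le i (W ∪ U)
    have h5 := Finset.card_union_le W U
    have h6 : (Finset.univ : Finset (Fin m)).card = m := by simp
    omega
  set Jf := fun ℓ : Fin m => Finset.univ.filter (fun j' : Fin n => j' < b ∧ σ j' = ℓ) with hJfdef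
  have hJmem : ∀ ℓ, ∀ j' ∈ Jf ℓ, j' < b ∧ σ j' = ℓ := by
    intro ℓ j' hj'; simpa [hJfdef] using hj'
  have hWmem : ∀ ℓ ∈ W, ℓ ≠ i ∧ ∀ j' : Fin n, j' < b → σ j' = ℓ → p j' < p a := by
    intro ℓ hℓ; simpa [hWdef] using hℓ
  -- each W machine has at least two jobs before b, all in R \ {b}
  have hJR : ∀ ℓ ∈ W, Jf ℓ ⊆ R.erase b := by
    intro ℓ hℓ j' hj'
    obtain ⟨h1, h2⟩ := hJmem ℓ j' hj'
    rw [Finset.mem_erase, hRdef, Finset.mem_filter]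
    exact ⟨h1.ne, Finset.mem_univ _, h1.le, (hWmem ℓ hℓ).2 j' h1 h2⟩
  have hJ2 : ∀ ℓ ∈ W, 2 ≤ (Jf ℓ).card := by
    intro ℓ hℓ
    have hx : p a ≤ ∑ j' ∈ Jf ℓ, p j' := hmin ℓ
    have hne1 : (Jf ℓ).Nonempty := by
      by_contra h
      rw [Finset.not_nonempty_iff_eq_empty] at h
      rw [h, Finset.sum_empty] at hx
      linarith
    obtain ⟨j1, hj1⟩ := hne1
    have hsum1 : ∑ j' ∈ (Jf ℓ).erase j1, p j' + p j1
        = ∑ j' ∈ Jf ℓ, p j' := Finset.sum_erase_add _ _ hj1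
    have hpj1 : p j1 < p a := by
      obtain ⟨h1, h2⟩ := hJmem ℓ j1 hj1
      exact (hWmem ℓ hℓ).2 j1 h1 h2
    have hne2 : ((Jf ℓ).erase j1).Nonempty := by
      by_contra h
      rw [Finset.not_nonempty_iff_eq_empty] at h
      rw [h, Finset.sum_empty] at hsum1
      rw [← hsum1] at hx
      linarith
    obtain ⟨j2, hj2⟩ := hne2
    apply Finset.one_lt_card.mpr
    exact ⟨j1, hj1, j2, Finset.mem_of_mem_erase hj2, (Finset.mem_erase.mp hj2).1.symm⟩
  have hdisj : ∀ ℓ₁ ∈ W, ∀ ℓ₂ ∈ W, ℓ₁ ≠ ℓ₂ → Disjoint (Jf ℓ₁) (Jf ℓ₂) := by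
    intro ℓ₁ _ ℓ₂ _ hne
    rw [Finset.disjoint_left]
    intro j' h1 h2
    exact hne ((hJmem ℓ₁ j' h1).2 ▸ (hJmem ℓ₂ j' h2).2 ▸ rfl)
  have hbiR : W.biUnion Jf ⊆ R.erase b := by
    intro j' hj'
    obtain ⟨ℓ, hℓ, hj⟩ := Finset.mem_biUnion.mp hj'
    exact hJR ℓ hℓ hj
  have hbicard : 2 * W.card ≤ (W.biUnion Jf).card := by
    rw [Finset.card_biUnion hdisj]
    calc 2 * W.card = ∑ _ℓ ∈ W, 2 := by rw [Finset.sum_const, smul_eq_mul, mul_comm]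
      _ ≤ ∑ ℓ ∈ W, (Jf ℓ).card := Finset.sum_le_sum hJ2
  have hRcard : 2 * W.card + 1 ≤ R.card := by
    have h1 := Finset.card_le_card hbiR
    have h2 : (R.erase b).card = R.card - 1 := Finset.card_erase_of_mem hbR
    have h3 : 1 ≤ R.card := Finset.card_pos.mpr ⟨b, hbR⟩
    omega
  -- sum over R is large
  have hsumbi : (W.card : ℝ) * p a ≤ ∑ j' ∈ W.biUnion Jf, p j' := by
    rw [Finset.sum_biUnion hdisj]
    have h := Finset.card_nsmul_le_sum W (fun ℓ => ∑ j' ∈ Jf ℓ, p j') (p a)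
      (fun ℓ _ => hmin ℓ)
    rw [nsmul_eq_mul] at h
    exact h
  have hsumR : (W.card : ℝ) * p a + p b ≤ ∑ j ∈ R, p j := by
    have h1 : ∑ j' ∈ W.biUnion Jf, p j' ≤ ∑ j ∈ R.erase b, p j :=
      Finset.sum_le_sum_of_subset_of_nonneg hbiR (fun t _ _ => hpos t)
    have h2 : ∑ j ∈ R.erase b, p j + p b = ∑ j ∈ R, p j :=
      Finset.sum_erase_add _ _ hbR
    linarith
  -- sum over R is bounded by (m - β) * Cs
  have hRmaps : ∀ j ∈ R, σs j ∈ MR := by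
    intro j hj
    rw [hMRdef, Finset.mem_sdiff]
    exact ⟨Finset.mem_univ _, hBRsep j hj⟩
  have hRsum_le : ∑ j ∈ R, p j ≤ (MR.card : ℝ) * Cs := by
    set s := Finset.univ.filter (fun j : Fin n => σs j ∈ MR) with hsdef
    have hRs : R ⊆ s := by
      intro j hj
      rw [hsdef, Finset.mem_filter]
      exact ⟨Finset.mem_univ _, hRmaps j hj⟩
    have h1 : ∑ j ∈ R, p j ≤ ∑ j ∈ s, p j :=
      Finset.sum_le_sum_of_subset_of_nonneg hRs (fun t _ _ => hpos t)
    have h2 : ∑ ℓ ∈ MR, ∑ j ∈ s.filter (fun j => σs j = ℓ), p j = ∑ j ∈ s, p j :=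
      Finset.sum_fiberwise_of_maps_to (fun j hj => by
        rw [hsdef, Finset.mem_filter] at hj; exact hj.2) p
    have h3 : ∀ ℓ ∈ MR, ∑ j ∈ s.filter (fun j => σs j = ℓ), p j ≤ Cs := by
      intro ℓ _
      refine le_trans (Finset.sum_le_sum_of_subset_of_nonneg ?_ (fun t _ _ => hpos t))
        (hload_le ℓ)
      intro j hj
      rw [Finset.mem_filter] at hj ⊢
      exact ⟨Finset.mem_univ _, hj.2⟩
    have h4 : ∑ ℓ ∈ MR, ∑ j ∈ s.filter (fun j => σs j = ℓ), p j ≤ MR.card • Cs :=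
      Finset.sum_le_card_nsmul _ _ _ h3
    rw [nsmul_eq_mul] at h4
    linarith
  -- pigeonhole: some optimal machine has 3 rest jobs
  have h3y : 3 * p b ≤ Cs := by
    have hWMR : MR.card ≤ W.card := by omega
    have hpi : MR.card * 2 < R.card := by omega
    obtain ⟨ℓ, _, hℓ3⟩ :=
      Finset.exists_lt_card_fiber_of_mul_lt_card_of_maps_to hRmaps hpi
    have h5 : (R.filter (fun j => σs j = ℓ)).card • p b
        ≤ ∑ j ∈ R.filter (fun j => σs j = ℓ), p j :=
      Finset.card_nsmul_le_sum _ _ _ (fun j hj => hRy j (Finset.mem_filter.mp hj).1)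
    rw [nsmul_eq_mul] at h5
    have h6 : ∑ j ∈ R.filter (fun j => σs j = ℓ), p j ≤ mload p σs ℓ := by
      refine Finset.sum_le_sum_of_subset_of_nonneg ?_ (fun t _ _ => hpos t)
      intro j hj
      rw [Finset.mem_filter] at hj ⊢
      exact ⟨Finset.mem_univ _, hj.2⟩
    have h7 : (3 : ℝ) ≤ ((R.filter (fun j => σs j = ℓ)).card : ℝ) := by
      exact_mod_cast hℓ3
    have h8 := hload_le ℓ
    nlinarith [hpos b]
  -- final arithmetic
  have hWcast : (MR.card : ℝ) * p a + p b ≤ (MR.card : ℝ) * Cs := by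
    have hWMR : (MR.card : ℝ) ≤ (W.card : ℝ) := by exact_mod_cast (by omega : MR.card ≤ W.card)
    nlinarith [hsumR, hRsum_le]
  have hMRle : (MR.card : ℝ) ≤ (m : ℝ) - 1 := by
    have : MR.card ≤ m - 1 := by omega
    have h := (Nat.cast_le (α := ℝ)).mpr this
    rw [Nat.cast_sub (by omega)] at h
    simpa using h
  have hCsa : p a ≤ Cs := hpj_le a
  have hkey : p b ≤ ((m : ℝ) - 1) * (Cs - p a) := by
    have hMR1 : (1 : ℝ) ≤ (MR.card : ℝ) := by
      exact_mod_cast Finset.card_pos.mpr ⟨σs b, hbMR⟩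
    nlinarith [hWcast]
  have hMpos : (0 : ℝ) < 3 * ((m : ℝ) - 1) := by linarith
  have hrw : (4 / 3 - 1 / (3 * ((m : ℝ) - 1)))
      = (4 * ((m : ℝ) - 1) - 1) / (3 * ((m : ℝ) - 1)) := by
    field_simp
  rw [hrw, div_mul_eq_mul_div, le_div_iff₀ hMpos]
  nlinarith [hkey, h3y, hpos b, hCs0,
    mul_nonneg (by linarith : (0:ℝ) ≤ (m : ℝ) - 2) (by linarith : (0:ℝ) ≤ Cs - 3 * p b)]
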